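/- For every ε > 0 there exists C_ε > 0 such that for all N ≥ 1 and all r, the set {n ≤ N : rad(n) = r} has cardinality at most C_ε · N^ε. -/

import Mathlib

/-- The radical of a positive integer: the product of its distinct prime factors. -/
def rad (n : ℕ) : ℕ := n.primeFactors.prod id

/-!
Rankin's trick. If `n ≤ N` then `1 ≤ (N / n) ^ ε`, so the number of `n ≤ N` with `rad n = r` is at
most `N ^ ε ∑ n ^ (-ε)`, the sum running over those `n`. Every such `n` is `∏_{p ∣ r} p ^ a_p` with all
`a_p ≥ 1`, so the sum is at most `∏_{p ∣ r} ∑_{a ≥ 1} p ^ (-a ε) = ∏_{p ∣ r} 1 / (p ^ ε - 1)`. A factor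
exceeds `1` only when `p ^ ε < 2`, i.e. for the finitely many primes `p < 2 ^ (1 / ε)`, so the product
is bounded independently of `r`.
-/

open Finset

theorem primeFactors_rad (n : ℕ) : (rad n).primeFactors = n.primeFactors :=
  Nat.primeFactors_prod_primeFactors n

theorem natCast_rpow_eq_prod_primeFactors {n : ℕ} (hn : n ≠ 0) (t : ℝ) :
    (n : ℝ) ^ t = ∏ p ∈ n.primeFactors, ((p : ℝ) ^ t) ^ n.factorization p := by
  conv_lhs => rw [← Nat.prod_factorization_pow_eq_self hn]
  rw [Nat.prod_factorization_eq_prod_primeFactors, Nat.cast_prod,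
    ← Real.finsetProd_rpow _ _ fun p _ => by positivity]
  refine prod_congr rfl fun p _ => ?_
  rw [Nat.cast_pow, ← Real.rpow_natCast, ← Real.rpow_mul (Nat.cast_nonneg p), mul_comm,
    Real.rpow_mul (Nat.cast_nonneg p), Real.rpow_natCast]

theorem card_le_rpow_mul_sum_rpow_neg {S : Finset ℕ} {N : ℕ} (hSN : S ⊆ Icc 1 N) {ε : ℝ}
    (hε : 0 ≤ ε) : (#S : ℝ) ≤ (N : ℝ) ^ ε * ∑ n ∈ S, (n : ℝ) ^ (-ε) := by
  have hterm : ∀ n ∈ S, 1 ≤ (N : ℝ) ^ ε * (n : ℝ) ^ (-ε) := by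
    intro n hn
    obtain ⟨h1n, hnN⟩ := mem_Icc.mp (hSN hn)
    have hn : (0 : ℝ) < n := by exact_mod_cast h1n
    rw [Real.rpow_neg hn.le, ← div_eq_mul_inv, one_le_div (by positivity)]
    exact Real.rpow_le_rpow hn.le (by exact_mod_cast hnN) hε
  rw [mul_sum]
  simpa using card_nsmul_le_sum S _ 1 hterm

/-- The exponent vectors of the `n` in `S` are distinct points of `∏_{p ∈ s} [1, N)`. -/
theorem sum_prod_pow_factorization_le {s S : Finset ℕ} {N : ℕ} (hSN : S ⊆ Icc 1 N)
    (hS : ∀ n ∈ S, n.primeFactors = s) (x : ℕ → ℝ) (hx : ∀ p, 0 ≤ x p) :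
    ∑ n ∈ S, ∏ p ∈ s, x p ^ n.factorization p ≤ ∏ p ∈ s, ∑ a ∈ Ico 1 N, x p ^ a := by
  classical
  have hS0 : ∀ n ∈ S, n ≠ 0 := fun n hn => Nat.one_le_iff_ne_zero.mp (mem_Icc.mp (hSN hn)).1
  let e : ℕ → s → ℕ := fun n p => n.factorization p
  have he_inj : Set.InjOn e S := by
    intro a ha b hb hab
    refine Nat.eq_of_factorization_eq (hS0 a ha) (hS0 b hb) fun p => ?_
    by_cases hp : p ∈ s
    · exact congrFun hab ⟨p, hp⟩
    · rw [Finsupp.notMem_support_iff.mp, Finsupp.notMem_support_iff.mp] <;>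
        simp only [Nat.support_factorization, hS a ha, hS b hb, hp, not_false_eq_true]
  have he_mem : ∀ n ∈ S, e n ∈ Fintype.piFinset fun _ : s => Ico 1 N := by
    intro n hn
    refine Fintype.mem_piFinset.mpr fun p => mem_Ico.mpr ⟨?_, ?_⟩
    · have hp : p.1 ∈ n.factorization.support := by
        rw [Nat.support_factorization, hS n hn]; exact p.2
      exact Nat.one_le_iff_ne_zero.mpr (Finsupp.mem_support_iff.mp hp)
    · exact (Nat.factorization_lt p (hS0 n hn)).trans_le (mem_Icc.mp (hSN hn)).2
  rw [← prod_coe_sort s, prod_univ_sum]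
  calc ∑ n ∈ S, ∏ p ∈ s, x p ^ n.factorization p
      = ∑ n ∈ S, ∏ p : s, x p ^ e n p := sum_congr rfl fun n _ => (prod_coe_sort s _).symm
    _ = ∑ f ∈ S.image e, ∏ p : s, x p ^ f p := (sum_image (f := fun f => ∏ p : s, x p ^ f p) he_inj).symm
    _ ≤ ∑ f ∈ Fintype.piFinset fun _ : s => Ico 1 N, ∏ p : s, x p ^ f p :=
      sum_le_sum_of_subset_of_nonneg (image_subset_iff.mpr he_mem)
        fun _ _ _ => prod_nonneg fun p _ => pow_nonneg (hx p) _

theorem sum_rpow_neg_rad_eq_le {ε : ℝ} (hε : 0 < ε) (N r : ℕ) :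
    ∑ n ∈ (Icc 1 N).filter (rad · = r), (n : ℝ) ^ (-ε) ≤
      ∏ p ∈ r.primeFactors, (p : ℝ) ^ (-ε) / (1 - (p : ℝ) ^ (-ε)) := by
  have hS : ∀ n ∈ (Icc 1 N).filter (rad · = r), n.primeFactors = r.primeFactors := by
    intro n hn
    rw [← (mem_filter.mp hn).2, primeFactors_rad]
  calc ∑ n ∈ (Icc 1 N).filter (rad · = r), (n : ℝ) ^ (-ε)
      = ∑ n ∈ (Icc 1 N).filter (rad · = r),
          ∏ p ∈ r.primeFactors, ((p : ℝ) ^ (-ε)) ^ n.factorization p := by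
        refine sum_congr rfl fun n hn => ?_
        have hn0 : n ≠ 0 := Nat.one_le_iff_ne_zero.mp (mem_Icc.mp (mem_filter.mp hn).1).1
        rw [natCast_rpow_eq_prod_primeFactors hn0, hS n hn]
    _ ≤ ∏ p ∈ r.primeFactors, ∑ a ∈ Ico 1 N, ((p : ℝ) ^ (-ε)) ^ a :=
        sum_prod_pow_factorization_le (filter_subset _ _) hS _ fun p => by positivity
    _ ≤ ∏ p ∈ r.primeFactors, (p : ℝ) ^ (-ε) / (1 - (p : ℝ) ^ (-ε)) := by
        refine prod_le_prod (fun p _ => sum_nonneg fun a _ => by positivity) fun p hp => ?_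
        have hp1 : (1 : ℝ) < p := by exact_mod_cast (Nat.prime_of_mem_primeFactors hp).one_lt
        simpa using geom_sum_Ico_le_of_lt_one (m := 1) (n := N) (by positivity)
          (Real.rpow_lt_one_of_one_lt_of_neg hp1 (neg_neg_of_pos hε))

theorem prod_le_prod_max_one {ι : Type*} {s T : Finset ι} {f : ι → ℝ} (h0 : ∀ i ∈ s, 0 ≤ f i)
    (h1 : ∀ i ∈ s, i ∉ T → f i ≤ 1) : ∏ i ∈ s, f i ≤ ∏ i ∈ T, max 1 (f i) := by
  classical
  calc ∏ i ∈ s, f i ≤ ∏ i ∈ s, max 1 (f i) := prod_le_prod h0 fun i _ => le_max_right _ _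
    _ = ∏ i ∈ s.filter (· ∈ T), max 1 (f i) := by
      rw [prod_filter_of_ne]
      intro i hi hne
      by_contra hiT
      exact hne (max_eq_left (h1 i hi hiT))
    _ ≤ ∏ i ∈ T, max 1 (f i) :=
      prod_le_prod_of_subset_of_one_le (fun i hi => (mem_filter.mp hi).2)
        (fun _ _ => zero_le_one.trans (le_max_left _ _)) fun _ _ _ => le_max_left _ _

theorem rpow_neg_div_one_sub_le_one {ε x : ℝ} (hε : 0 < ε) (hx : (2 : ℝ) ^ ε⁻¹ ≤ x) :
    x ^ (-ε) / (1 - x ^ (-ε)) ≤ 1 := by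
  have hx0 : 0 ≤ x := (Real.rpow_nonneg zero_le_two _).trans hx
  have h2 : 2 ≤ x ^ ε := (Real.rpow_inv_le_iff_of_pos zero_le_two hx0 hε).mp hx
  have hhalf : x ^ (-ε) ≤ 1 / 2 := by
    rw [Real.rpow_neg hx0, one_div]
    exact inv_anti₀ two_pos h2
  rw [div_le_one (by linarith)]
  linarith

theorem card_rad_eq_le_uniform (ε : ℝ) (hε : 0 < ε) :
    ∃ C : ℝ, 0 < C ∧ ∀ N : ℕ, 1 ≤ N → ∀ r : ℕ,
      (((Finset.Icc 1 N).filter (fun n => rad n = r)).card : ℝ) ≤ C * (N : ℝ) ^ ε := by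
  set w : ℕ → ℝ := fun p => (p : ℝ) ^ (-ε) / (1 - (p : ℝ) ^ (-ε))
  set C := ∏ p ∈ range ⌈(2 : ℝ) ^ ε⁻¹⌉₊, max 1 (w p)
  refine ⟨C, prod_pos fun p _ => one_pos.trans_le (le_max_left _ _), fun N _ r => ?_⟩
  have hw : ∏ p ∈ r.primeFactors, w p ≤ C := by
    refine prod_le_prod_max_one (fun p hp => ?_) fun p _ hpB => ?_
    · have hp1 : (1 : ℝ) < p := by exact_mod_cast (Nat.prime_of_mem_primeFactors hp).one_lt
      have := Real.rpow_lt_one_of_one_lt_of_neg hp1 (neg_neg_of_pos hε)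
      exact div_nonneg (by positivity) (by linarith)
    · refine rpow_neg_div_one_sub_le_one hε ((Nat.le_ceil _).trans ?_)
      exact_mod_cast not_lt.mp (mt mem_range.mpr hpB)
  calc (((Icc 1 N).filter (fun n => rad n = r)).card : ℝ)
      ≤ (N : ℝ) ^ ε * ∑ n ∈ (Icc 1 N).filter (rad · = r), (n : ℝ) ^ (-ε) :=
        card_le_rpow_mul_sum_rpow_neg (filter_subset _ _) hε.le
    _ ≤ (N : ℝ) ^ ε * C := by grw [sum_rpow_neg_rad_eq_le hε N r, hw]
    _ = C * (N : ℝ) ^ ε := mul_comm _ _
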